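/- Let φ be a bounded Markovian random iteration with constant C, and let F be the induced skew product on Σ × M. Let h: Σ × M → [0,∞) be measurable with h(ω,x) ≥ h(F(ω,x)) for all (ω,x), and define h̄(x) = ∫ h(ω,x) dℙ(ω). Then for every n ≥ 1 and x₀ ∈ M, 𝔼(h(Fⁿ(·, x₀)) | 𝓕_{n-1})(ω) ≥ C·h̄(f_ω^n(x₀)) for ℙ-almost every ω, where 𝓕_{n-1} is the σ-algebra generated by the coordinate projections ω ↦ ω_i for i = 0,…,n−1. -/

import Mathlib

open MeasureTheory ProbabilityTheory ENNReal

noncomputable def chainProb {E : Type*} [MeasurableSpace E] (p : ProbabilityTheory.Kernel E E) :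
    ℕ → (ℕ → Set E) → E → ℝ≥0∞
  | 0, _, _ => 1
  | (n + 1), A, α => ∫⁻ β in A 0, chainProb p n (fun i => A (i + 1)) β ∂(p α)

def IsMarkovMeasure {E : Type*} [MeasurableSpace E] (p : ProbabilityTheory.Kernel E E)
    (m : Measure E) (P : Measure (ℕ → E)) : Prop :=
  ∀ (n : ℕ) (A : ℕ → Set E), (∀ i, MeasurableSet (A i)) →
    P {ω | ∀ i ≤ n, ω i ∈ A i} = ∫⁻ α in A 0, chainProb p n (fun i => A (i + 1)) α ∂m

/-- The skew product `F(ω,x) = (σω, f_{ω₀}(x))`. -/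
def skewF {E M : Type*} (f : E → M → M) (z : (ℕ → E) × M) : (ℕ → E) × M :=
  (fun n => z.1 (n + 1), f (z.1 0) z.2)

/-- The random iteration `f_ω^n = f_{ω_{n-1}} ∘ ⋯ ∘ f_{ω₀}`. -/
def iterRI {E M : Type*} (f : E → M → M) (ω : ℕ → E) : ℕ → M → M
  | 0 => id
  | (n + 1) => fun x => f (ω n) (iterRI f ω n x)

/-- The σ-algebra `𝓕_{n-1}` generated by the coordinate projections `ω ↦ ω_i`,
`i = 0, …, n-1`. -/
def coordSigma (E : Type*) [MeasurableSpace E] (n : ℕ) : MeasurableSpace (ℕ → E) :=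
  MeasurableSpace.comap (fun ω (i : Fin n) => ω (i : ℕ)) inferInstance

/-!
Given `ω₀, …, ω_{n-1}`, the shifted path `σⁿω` is distributed as the chain started from
`p(ω_{n-1}, ·) = k(ω_{n-1}, ·) m`, whose law is `ℙ` reweighted by the density
`ϑ ↦ k(ω_{n-1}, ϑ₀) ≥ C`. As `Fⁿ(ω, x₀) = (σⁿω, f_ω^n(x₀))` and `f_ω^n(x₀)` depends only on
`ω₀, …, ω_{n-1}`, integrating over `D ∈ 𝓕_{n-1}` first in the shifted path gives the bound.
The Markov property is checked on products of a cylinder in the first `n` coordinates with a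
cylinder in the others, where both sides are iterated integrals of `p` over cylinder sets.
-/

open Set

lemma Set.pi_update_inter {ι α : Type*} [DecidableEq ι] {s : Set ι} {j : ι} (hj : j ∈ s)
    (B : ι → Set α) (V : Set α) :
    s.pi (Function.update B j (B j ∩ V)) = s.pi B ∩ (fun ω => ω j) ⁻¹' V := by
  ext ω
  simp only [mem_pi, mem_inter_iff, mem_preimage, Function.update_apply]
  grind

lemma Set.pi_coe_finset_eq_pi_Iic {α : Type*} (s : Finset ℕ) (t : ℕ → Set α) :
    (s : Set ℕ).pi t = (Iic (s.sup id)).pi fun i => if i ∈ s then t i else univ := by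
  ext ω
  simp only [mem_pi, Finset.mem_coe, mem_Iic]
  constructor
  · intro h i _
    by_cases hi : i ∈ s
    · simpa [hi] using h i hi
    · simp [hi]
  · intro h i hi
    simpa [hi] using h i (Finset.le_sup (f := id) hi)

lemma isCountablySpanning_squareCylinders {ι : Type*} {α : ι → Type*}
    {C : ∀ i, Set (Set (α i))} (hC : ∀ i, univ ∈ C i) :
    IsCountablySpanning (squareCylinders C) :=
  ⟨fun _ => univ, fun _ => ⟨∅, fun i => univ, fun i _ => hC i, by simp⟩, iUnion_const _⟩

def finAppendSeq {α : Type*} {n : ℕ} (B : Fin n → α) (A : ℕ → α) (i : ℕ) : α :=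
  if h : i < n then B ⟨i, h⟩ else A (i - n)

lemma finAppendSeq_of_lt {α : Type*} {n : ℕ} (B : Fin n → α) (A : ℕ → α) {i : ℕ} (h : i < n) :
    finAppendSeq B A i = B ⟨i, h⟩ :=
  dif_pos h

lemma finAppendSeq_add {α : Type*} {n : ℕ} (B : Fin n → α) (A : ℕ → α) (i : ℕ) :
    finAppendSeq B A (i + n) = A i := by
  simp [finAppendSeq]

lemma preimage_prefix_shift_prod {α : Type*} (n N : ℕ) (B : Fin (n + 1) → Set α)
    (A : ℕ → Set α) :
    (fun ω : ℕ → α => ((fun i : Fin (n + 1) => ω i), fun i => ω (i + (n + 1)))) ⁻¹'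
        (univ.pi B ×ˢ (Iic N).pi A) = (Iic (n + (N + 1))).pi (finAppendSeq B A) := by
  ext ω
  simp only [mem_preimage, mem_prod, mem_univ_pi]
  simp only [mem_pi, mem_Iic]
  constructor
  · rintro ⟨hB, hA⟩ i hi
    by_cases h : i < n + 1
    · simpa [finAppendSeq_of_lt B A h] using hB ⟨i, h⟩
    · obtain ⟨j, rfl⟩ := Nat.exists_eq_add_of_le' (not_lt.1 h)
      simpa [finAppendSeq_add] using hA j (by omega)
  · intro h
    refine ⟨fun i => ?_, fun j hj => ?_⟩
    · simpa [finAppendSeq_of_lt B A i.isLt] using h i (by omega)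
    · simpa [finAppendSeq_add] using h (j + (n + 1)) (by omega)

lemma preimage_prefix_pi {α : Type*} (n : ℕ) (B : Fin (n + 1) → Set α) (A : ℕ → Set α) :
    (fun (ω : ℕ → α) (i : Fin (n + 1)) => ω i) ⁻¹' univ.pi B = (Iic n).pi (finAppendSeq B A) := by
  ext ω
  simp only [mem_preimage, mem_univ_pi]
  simp only [mem_pi, mem_Iic]
  constructor
  · intro h i hi
    simpa [finAppendSeq_of_lt B A (Nat.lt_succ_of_le hi)] using h ⟨i, by omega⟩
  · intro h i
    simpa [finAppendSeq_of_lt B A i.isLt] using h i (by omega)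

theorem MeasureTheory.Measure.const_mul_setLIntegral_le_of_map_eq_compProd
    {Ω α β : Type*} [MeasurableSpace Ω] [MeasurableSpace α] [MeasurableSpace β]
    {μ : Measure Ω} [SFinite μ] {π : Ω → α} {σ : Ω → β} (hπ : Measurable π) (hσ : Measurable σ)
    {κ : Kernel α β} [IsSFiniteKernel κ] (hmap : μ.map (fun x => (π x, σ x)) = μ.map π ⊗ₘ κ)
    {ν : Measure β} [SFinite ν] {c : ℝ≥0∞} (hκ : ∀ a, c • ν ≤ κ a)
    {s : Set α} (hs : MeasurableSet s) {g : α × β → ℝ≥0∞} (hg : Measurable g) :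
    c * ∫⁻ x in π ⁻¹' s, ∫⁻ y, g (π x, y) ∂ν ∂μ ≤ ∫⁻ x in π ⁻¹' s, g (π x, σ x) ∂μ :=
  calc c * ∫⁻ x in π ⁻¹' s, ∫⁻ y, g (π x, y) ∂ν ∂μ
      = ∫⁻ a in s, ∫⁻ y, g (a, y) ∂(c • ν) ∂μ.map π := by
        simp only [lintegral_smul_measure, smul_eq_mul]
        rw [lintegral_const_mul _ hg.lintegral_prod_right',
          setLIntegral_map hs hg.lintegral_prod_right' hπ]
    _ ≤ ∫⁻ a in s, ∫⁻ y, g (a, y) ∂κ a ∂μ.map π :=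
        lintegral_mono fun a => lintegral_mono' (hκ a) le_rfl
    _ = ∫⁻ z in s ×ˢ univ, g z ∂(μ.map π ⊗ₘ κ) := by
        simp only [Measure.setLIntegral_compProd hg hs .univ, Measure.restrict_univ]
    _ = ∫⁻ x in π ⁻¹' s, g (π x, σ x) ∂μ := by
        rw [← hmap, setLIntegral_map (hs.prod .univ) hg (hπ.prodMk hσ), mk_preimage_prod,
          preimage_univ, inter_univ]

section ChainKernel

variable {E : Type*} [MeasurableSpace E]

lemma measurableSet_pi_Iic {B : ℕ → Set E} (hB : ∀ i, MeasurableSet (B i)) (t : ℕ) :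
    MeasurableSet ((Iic t).pi B) :=
  .pi (to_countable _) fun i _ => hB i

lemma measurableSet_update_inter {B : ℕ → Set E} (hB : ∀ i, MeasurableSet (B i)) (j : ℕ)
    {V : Set E} (hV : MeasurableSet V) (i : ℕ) :
    MeasurableSet (Function.update B j (B j ∩ V) i) := by
  rcases eq_or_ne i j with rfl | hij
  · simpa using (hB i).inter hV
  · simpa [hij] using hB i

/-- `chainKernel p hA t α` is the law of `X_t`, restricted to the event
`X₁ ∈ A 0, …, X_t ∈ A (t - 1)`, of the chain with kernel `p` started at `X₀ = α`. -/
noncomputable def chainKernel (p : Kernel E E) :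
    ∀ {A : ℕ → Set E}, (∀ i, MeasurableSet (A i)) → ℕ → Kernel E E
  | _, _, 0 => Kernel.id
  | _, hA, t + 1 => chainKernel p (fun i => hA (i + 1)) t ∘ₖ p.restrict (hA 0)

variable {p : Kernel E E}

lemma chainKernel_succ_apply {A : ℕ → Set E} (hA : ∀ i, MeasurableSet (A i)) (t : ℕ) (α : E)
    {V : Set E} (hV : MeasurableSet V) :
    chainKernel p hA (t + 1) α V = ∫⁻ β in A 0, chainKernel p (fun i => hA (i + 1)) t β V ∂p α := by
  rw [chainKernel, Kernel.comp_apply' _ _ _ hV, Kernel.restrict_apply]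

lemma chainProb_eq_chainKernel_univ :
    ∀ {A : ℕ → Set E} (hA : ∀ i, MeasurableSet (A i)) (t : ℕ) (α : E),
      chainProb p t A α = chainKernel p hA t α univ
  | _, _, 0, _ => by simp [chainProb, chainKernel]
  | _, hA, t + 1, α => by
    rw [chainKernel_succ_apply hA t α MeasurableSet.univ, chainProb]
    simp only [chainProb_eq_chainKernel_univ (fun i => hA (i + 1)) t]

lemma measurable_chainProb {A : ℕ → Set E} (hA : ∀ i, MeasurableSet (A i)) (t : ℕ) :
    Measurable (chainProb p t A) := by
  simp only [funext (chainProb_eq_chainKernel_univ hA t)]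
  exact (chainKernel p hA t).measurable_coe MeasurableSet.univ

lemma chainKernel_succ_apply_eq_chainProb {V : Set E} (hV : MeasurableSet V) :
    ∀ {A : ℕ → Set E} (hA : ∀ i, MeasurableSet (A i)) (t : ℕ) (α : E),
      chainKernel p hA (t + 1) α V = chainProb p (t + 1) (Function.update A t (A t ∩ V)) α
  | A, hA, 0, α => by
    rw [chainKernel_succ_apply hA 0 α hV]
    simp only [chainKernel, Kernel.id_apply, Measure.dirac_apply' _ hV, lintegral_indicator_one hV,
      Measure.restrict_apply hV, chainProb, Function.update_self, setLIntegral_one, inter_comm]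
  | A, hA, t + 1, α => by
    rw [chainKernel_succ_apply hA (t + 1) α hV, chainProb, Function.update_of_ne (by omega)]
    simp only [chainKernel_succ_apply_eq_chainProb hV (fun i => hA (i + 1)) t]
    rw [← Function.update_comp_eq_of_injective' A Nat.succ_injective]

lemma lintegral_chainKernel_chainProb (s : ℕ) :
    ∀ {D : ℕ → Set E} (hD : ∀ i, MeasurableSet (D i)) (t : ℕ) (α : E),
      ∫⁻ β, chainProb p s (fun i => D (i + t)) β ∂chainKernel p hD t α = chainProb p (t + s) D α
  | D, hD, 0, α => by
    simp only [chainKernel, Kernel.id_apply, lintegral_dirac' _ (measurable_chainProb hD s),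
      Nat.add_zero, Nat.zero_add]
  | D, hD, t + 1, α => by
    have hmeas : ∀ i, MeasurableSet (D (i + (t + 1))) := fun i => hD _
    rw [chainKernel, Kernel.lintegral_comp _ _ _ (measurable_chainProb hmeas s),
      Kernel.restrict_apply, Nat.add_right_comm, chainProb]
    exact lintegral_congr fun β => lintegral_chainKernel_chainProb s (fun i => hD (i + 1)) t β

/-- For the Markov measure `P` of `p α = k α • m`, `pathKernel P k α` is the law of the chain
started from `p α`. -/
noncomputable def pathKernel (P : Measure (ℕ → E)) [SFinite P] (k : E → E → ℝ≥0∞) :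
    Kernel E (ℕ → E) :=
  (Kernel.const E P).withDensity fun α ϑ => k α (ϑ 0)

variable {P : Measure (ℕ → E)} [SFinite P] {k : E → E → ℝ≥0∞}

lemma isSFiniteKernel_pathKernel (hk_ne_top : ∀ α β, k α β ≠ ∞) :
    IsSFiniteKernel (pathKernel P k) :=
  Kernel.IsSFiniteKernel.withDensity _ fun _ _ => hk_ne_top _ _

lemma pathKernel_apply (hk : Measurable fun z : E × E => k z.1 z.2) (α : E) :
    pathKernel P k α = P.withDensity fun ϑ => k α (ϑ 0) := by
  have hdensity : Measurable (Function.uncurry fun α (ϑ : ℕ → E) => k α (ϑ 0)) :=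
    hk.comp (measurable_fst.prodMk ((measurable_pi_apply 0).comp measurable_snd))
  rw [pathKernel, Kernel.withDensity_apply _ hdensity, Kernel.const_apply]

lemma smul_le_pathKernel (hk : Measurable fun z : E × E => k z.1 z.2) {C : ℝ≥0∞}
    (hC : ∀ α β, C ≤ k α β) (α : E) : C • P ≤ pathKernel P k α := by
  rw [pathKernel_apply hk, ← withDensity_const]
  exact withDensity_mono (ae_of_all _ fun ϑ => hC _ _)

end ChainKernel

namespace IsMarkovMeasure

variable {E : Type*} [MeasurableSpace E] {p : Kernel E E} {m : Measure E} {P : Measure (ℕ → E)}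

lemma measure_pi_Iic (hP : IsMarkovMeasure p m P) {A : ℕ → Set E}
    (hA : ∀ i, MeasurableSet (A i)) (t : ℕ) :
    P ((Iic t).pi A) = ∫⁻ α in A 0, chainProb p t (fun i => A (i + 1)) α ∂m :=
  hP t A hA

lemma setLIntegral_pi_Iic_eval (hP : IsMarkovMeasure p m P) {B : ℕ → Set E}
    (hB : ∀ i, MeasurableSet (B i)) (t : ℕ) {g : E → ℝ≥0∞} (hg : Measurable g) :
    ∫⁻ ω in (Iic t).pi B, g (ω t) ∂P =
      ∫⁻ α in B 0, ∫⁻ β, g β ∂chainKernel p (fun i => hB (i + 1)) t α ∂m := by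
  have hlaw : (P.restrict ((Iic t).pi B)).map (fun ω => ω t) =
      chainKernel p (fun i => hB (i + 1)) t ∘ₘ m.restrict (B 0) := by
    ext V hV
    rw [Measure.map_apply (measurable_pi_apply t) hV,
      Measure.restrict_apply (measurable_pi_apply t hV), inter_comm,
      ← pi_update_inter self_mem_Iic, hP.measure_pi_Iic (measurableSet_update_inter hB t hV),
      Measure.bind_apply hV (Kernel.aemeasurable _)]
    cases t with
    | zero =>
      simp only [chainKernel, chainProb, Kernel.id_apply, Measure.dirac_apply' _ hV,
        Function.update_self, setLIntegral_one, lintegral_indicator_one hV,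
        Measure.restrict_apply hV, inter_comm]
    | succ t =>
      have hshift : (fun i => Function.update B (t + 1) (B (t + 1) ∩ V) (i + 1)) =
          Function.update (fun i => B (i + 1)) t (B (t + 1) ∩ V) :=
        Function.update_comp_eq_of_injective' B Nat.succ_injective t _
      rw [Function.update_of_ne (Nat.succ_ne_zero t).symm, hshift]
      exact (lintegral_congr fun α =>
        chainKernel_succ_apply_eq_chainProb hV (fun i => hB (i + 1)) t α).symm
  rw [← lintegral_map hg (measurable_pi_apply t), hlaw,
    Measure.lintegral_bind (Kernel.aemeasurable _) hg.aemeasurable]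

lemma setLIntegral_pi_Iic_chainProb (hP : IsMarkovMeasure p m P) {G : ℕ → Set E}
    (hG : ∀ i, MeasurableSet (G i)) (t s : ℕ) :
    ∫⁻ ω in (Iic t).pi G, chainProb p s (fun i => G (i + (t + 1))) (ω t) ∂P =
      P ((Iic (t + s)).pi G) := by
  rw [setLIntegral_pi_Iic_eval hP hG t (measurable_chainProb (fun i => hG _) s),
    hP.measure_pi_Iic hG]
  exact lintegral_congr fun α => lintegral_chainKernel_chainProb s (fun i => hG (i + 1)) t α

lemma setLIntegral_pi_Iic_eval_zero (hP : IsMarkovMeasure p m P) {A : ℕ → Set E}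
    (hA : ∀ i, MeasurableSet (A i)) (N : ℕ) {g : E → ℝ≥0∞} (hg : Measurable g) :
    ∫⁻ ϑ in (Iic N).pi A, g (ϑ 0) ∂P =
      ∫⁻ β in A 0, chainProb p N (fun i => A (i + 1)) β * g β ∂m := by
  have hlaw : (P.restrict ((Iic N).pi A)).map (fun ϑ => ϑ 0) =
      (m.restrict (A 0)).withDensity (chainProb p N fun i => A (i + 1)) := by
    ext V hV
    rw [Measure.map_apply (measurable_pi_apply 0) hV,
      Measure.restrict_apply (measurable_pi_apply 0 hV), inter_comm,
      ← pi_update_inter (mem_Iic.2 (Nat.zero_le N)),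
      hP.measure_pi_Iic (measurableSet_update_inter hA 0 hV),
      withDensity_apply _ hV, Measure.restrict_restrict hV, Function.update_self, inter_comm V]
    rfl
  rw [← lintegral_map hg (measurable_pi_apply 0), hlaw,
    lintegral_withDensity_eq_lintegral_mul _ (measurable_chainProb (fun i => hA _) N) hg]
  rfl

variable [SFinite P] {k : E → E → ℝ≥0∞}

lemma pathKernel_apply_pi_Iic (hP : IsMarkovMeasure p m P)
    (hk : Measurable fun z : E × E => k z.1 z.2) (hdens : ∀ α, p α = m.withDensity (k α))
    {A : ℕ → Set E} (hA : ∀ i, MeasurableSet (A i)) (N : ℕ) (α : E) :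
    pathKernel P k α ((Iic N).pi A) = chainProb p (N + 1) A α := by
  have hkα : Measurable (k α) := hk.comp (measurable_const.prodMk measurable_id)
  rw [pathKernel_apply hk, withDensity_apply _ (measurableSet_pi_Iic hA N),
    setLIntegral_pi_Iic_eval_zero hP hA N hkα, chainProb, hdens, restrict_withDensity (hA 0),
    lintegral_withDensity_eq_lintegral_mul _ hkα (measurable_chainProb (fun i => hA _) N)]
  simp only [Pi.mul_apply, mul_comm]

lemma map_prefix_shift_apply_prod (hP : IsMarkovMeasure p m P)
    (hk : Measurable fun z : E × E => k z.1 z.2) (hk_ne_top : ∀ α β, k α β ≠ ∞)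
    (hdens : ∀ α, p α = m.withDensity (k α))
    (n : ℕ) {B : Fin (n + 1) → Set E} (hB : ∀ i, MeasurableSet (B i))
    (N : ℕ) {A : ℕ → Set E} (hA : ∀ i, MeasurableSet (A i)) :
    P.map (fun ω => ((fun i : Fin (n + 1) => ω i), fun i => ω (i + (n + 1))))
        (univ.pi B ×ˢ (Iic N).pi A) =
      (P.map (fun ω (i : Fin (n + 1)) => ω i) ⊗ₘ
        (pathKernel P k).comap (fun a => a (Fin.last n)) (measurable_pi_apply _))
        (univ.pi B ×ˢ (Iic N).pi A) := by
  have := isSFiniteKernel_pathKernel (P := P) hk_ne_top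
  have hG : ∀ i, MeasurableSet (finAppendSeq B A i) := fun i => by
    unfold finAppendSeq; split_ifs
    exacts [hB _, hA _]
  have hprefix : Measurable fun (ω : ℕ → E) (i : Fin (n + 1)) => ω i :=
    measurable_pi_lambda _ fun i => measurable_pi_apply _
  have hshift : Measurable fun (ω : ℕ → E) i => ω (i + (n + 1)) :=
    measurable_pi_lambda _ fun i => measurable_pi_apply _
  have hpiB : MeasurableSet (univ.pi B) := .univ_pi hB
  rw [Measure.map_apply (hprefix.prodMk hshift) (hpiB.prod (measurableSet_pi_Iic hA N)),
    preimage_prefix_shift_prod, Measure.compProd_apply_prod hpiB (measurableSet_pi_Iic hA N)]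
  simp only [Kernel.comap_apply, pathKernel_apply_pi_Iic hP hk hdens hA]
  have hintegrand : Measurable fun a : Fin (n + 1) → E => chainProb p (N + 1) A (a (Fin.last n)) :=
    (measurable_chainProb hA _).comp (measurable_pi_apply _)
  rw [setLIntegral_map hpiB hintegrand hprefix,
    preimage_prefix_pi n B A, ← setLIntegral_pi_Iic_chainProb hP hG n (N + 1)]
  simp only [Fin.val_last, finAppendSeq_add]

theorem map_prefix_shift_eq_compProd [IsFiniteMeasure P] (hP : IsMarkovMeasure p m P)
    (hk : Measurable fun z : E × E => k z.1 z.2) (hk_ne_top : ∀ α β, k α β ≠ ∞)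
    (hdens : ∀ α, p α = m.withDensity (k α)) (n : ℕ) :
    P.map (fun ω => ((fun i : Fin (n + 1) => ω i), fun i => ω (i + (n + 1)))) =
      P.map (fun ω (i : Fin (n + 1)) => ω i) ⊗ₘ
        (pathKernel P k).comap (fun a => a (Fin.last n)) (measurable_pi_apply _) := by
  have hgen : (inferInstance : MeasurableSpace ((Fin (n + 1) → E) × (ℕ → E))) =
      MeasurableSpace.generateFrom (image2 (· ×ˢ ·)
        (pi univ '' pi univ fun _ => {s : Set E | MeasurableSet s})
        (squareCylinders fun _ => {s : Set E | MeasurableSet s})) := by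
    rw [← generateFrom_prod_eq (.pi fun _ => isCountablySpanning_measurableSet)
      (isCountablySpanning_squareCylinders fun _ => .univ), generateFrom_pi,
      generateFrom_squareCylinders]
  refine ext_of_generate_finite _ hgen (isPiSystem_pi.prod
    (isPiSystem_squareCylinders (fun _ => MeasurableSpace.isPiSystem_measurableSet) fun _ => .univ))
    ?_ ?_
  · rintro _ ⟨_, ⟨B, hB, rfl⟩, _, ⟨s, t, ht, rfl⟩, rfl⟩
    rw [pi_coe_finset_eq_pi_Iic]
    refine map_prefix_shift_apply_prod hP hk hk_ne_top hdens n (fun i => hB i trivial) _ fun i => ?_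
    split_ifs
    exacts [ht i trivial, .univ]
  · have huniv : (univ : Set ((Fin (n + 1) → E) × (ℕ → E))) =
        univ.pi (fun _ => univ) ×ˢ (Iic 0).pi fun _ => univ := by simp
    rw [huniv]
    exact map_prefix_shift_apply_prod hP hk hk_ne_top hdens n (fun _ => .univ) 0 fun _ => .univ

end IsMarkovMeasure

lemma skewF_iterate {E M : Type*} (f : E → M → M) (t : ℕ) (ω : ℕ → E) (x : M) :
    (skewF f)^[t] (ω, x) = (fun i => ω (i + t), iterRI f ω t x) := by
  induction t with
  | zero => rfl
  | succ t ih =>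
    rw [Function.iterate_succ_apply', ih]
    simp only [skewF, Nat.zero_add, iterRI, Nat.add_right_comm _ 1 t, Nat.add_assoc]

lemma measurable_iterRI_coordSigma {E M : Type*} [MeasurableSpace E] [MeasurableSpace M]
    {f : E → M → M} (hf : Measurable fun z : E × M => f z.1 z.2) (x : M) {n : ℕ} :
    ∀ t ≤ n, Measurable[coordSigma E n] fun ω => iterRI f ω t x
  | 0, _ => measurable_const
  | t + 1, ht => hf.comp <| ((measurable_pi_apply (⟨t, ht⟩ : Fin n)).comp
      (comap_measurable _)).prodMk (measurable_iterRI_coordSigma hf x t (by omega))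

/-- The almost-sure inequality for the conditional expectation is stated through its integrals
over the sets `D ∈ 𝓕_{n-1}`. -/
theorem condexp_lower_bound_general {E M : Type*}
    [MeasurableSpace E] [MeasurableSpace M] [StandardBorelSpace M]
    (p : ProbabilityTheory.Kernel E E)
    (m : Measure E)
    (C : ℝ≥0∞) (hC0 : 0 < C)
    (k : E → E → ℝ≥0∞) (hk : Measurable fun z : E × E => k z.1 z.2)
    (hdens : ∀ α, (p α : Measure E) = m.withDensity (k α))
    (hbound : ∀ α β, C ≤ k α β ∧ k α β ≤ C⁻¹)
    (f : E → M → M) (hf : Measurable fun z : E × M => f z.1 z.2)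
    (P : Measure (ℕ → E)) [IsProbabilityMeasure P] (hP : IsMarkovMeasure p m P)
    (h : (ℕ → E) × M → ℝ≥0∞) (hh : Measurable h)
    (n : ℕ) (hn : 1 ≤ n) (x₀ : M)
    (D : Set (ℕ → E)) (hD : MeasurableSet[coordSigma E n] D) :
    C * ∫⁻ ω in D, (∫⁻ ϑ, h (ϑ, iterRI f ω n x₀) ∂P) ∂P ≤
      ∫⁻ ω in D, h ((skewF f)^[n] (ω, x₀)) ∂P := by
  obtain ⟨n, rfl⟩ := Nat.exists_eq_add_of_le' hn
  obtain ⟨D', hD', rfl⟩ := hD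
  have : Nonempty M := ⟨x₀⟩
  obtain ⟨φ, hφ, hφ_eq⟩ :=
    (measurable_iterRI_coordSigma hf x₀ (n + 1) le_rfl).exists_eq_measurable_comp
  have hk_ne_top : ∀ α β, k α β ≠ ∞ := fun α β =>
    ((hbound α β).2.trans_lt (ENNReal.inv_lt_top.2 hC0)).ne
  have := isSFiniteKernel_pathKernel (P := P) hk_ne_top
  have hφ_apply : ∀ ω, iterRI f ω (n + 1) x₀ = φ fun i : Fin (n + 1) => ω i :=
    congrFun hφ_eq
  simp only [skewF_iterate, hφ_apply]
  exact Measure.const_mul_setLIntegral_le_of_map_eq_compProd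
    (measurable_pi_lambda _ fun i => measurable_pi_apply _)
    (measurable_pi_lambda _ fun i => measurable_pi_apply _)
    (hP.map_prefix_shift_eq_compProd hk hk_ne_top hdens n)
    (fun _ => smul_le_pathKernel hk (fun α β => (hbound α β).1) _) hD'
    (hh.comp (measurable_snd.prodMk (hφ.comp measurable_fst)))

/-- Lemma 4.1. For a bounded Markovian random iteration with constant
`C` and a measurable `h ≥ h ∘ F`, one has
`𝔼(h(Fⁿ(·,x₀)) | 𝓕_{n-1}) ≥ C · h̄(f_ω^n(x₀))` ℙ-a.s., stated equivalently as the
defining integral inequality over all sets `D ∈ 𝓕_{n-1}`, where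
`h̄(x) = ∫ h(ω,x) dℙ(ω)`. -/
theorem condexp_lower_bound {E M : Type*}
    [MeasurableSpace E] [StandardBorelSpace E] [MeasurableSpace M] [StandardBorelSpace M]
    (p : ProbabilityTheory.Kernel E E) [IsMarkovKernel p]
    (m : Measure E) [IsProbabilityMeasure m]
    (hstat : ∀ A : Set E, MeasurableSet A → m A = ∫⁻ α, p α A ∂m)
    (huniq : ∀ m' : Measure E, IsProbabilityMeasure m' →
      (∀ A : Set E, MeasurableSet A → m' A = ∫⁻ α, p α A ∂m') → m' = m)
    (C : ℝ≥0∞) (hC0 : 0 < C) (hC1 : C ≤ 1)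
    (k : E → E → ℝ≥0∞) (hk : Measurable fun z : E × E => k z.1 z.2)
    (hdens : ∀ α, (p α : Measure E) = m.withDensity (k α))
    (hbound : ∀ α β, C ≤ k α β ∧ k α β ≤ C⁻¹)
    (f : E → M → M) (hf : Measurable fun z : E × M => f z.1 z.2)
    (P : Measure (ℕ → E)) [IsProbabilityMeasure P] (hP : IsMarkovMeasure p m P)
    (h : (ℕ → E) × M → ℝ≥0∞) (hh : Measurable h)
    (hmono : ∀ z, h (skewF f z) ≤ h z)
    (n : ℕ) (hn : 1 ≤ n) (x₀ : M)
    (D : Set (ℕ → E)) (hD : MeasurableSet[coordSigma E n] D) :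
    C * ∫⁻ ω in D, (∫⁻ ϑ, h (ϑ, iterRI f ω n x₀) ∂P) ∂P ≤
      ∫⁻ ω in D, h ((skewF f)^[n] (ω, x₀)) ∂P :=
  condexp_lower_bound_general p m C hC0 k hk hdens hbound f hf P hP h hh n hn x₀ D hD
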